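/- Let X : [0,L] → ℝ^d be a piecewise continuously differentiable path and let B : ℝ^m → T^{≥1}(ℝ^d) be a linear map. Define the path Y : [0,L] → ℝ^m by Y_t^i := ⟨σ(X|_{[0,t]}), B(e_i)⟩ for i = 1,…,m. Then the signature of Y is a linear transformation of the signature of X: for every w ∈ T^{≥1}(ℝ^m), ⟨σ(Y), w⟩ = ⟨σ(X), Λ_B(w)⟩, where Λ_B is the unique extension of B to a Zinbiel homomorphism (T^{≥1}(ℝ^m), ≻) → (T^{≥1}(ℝ^d), ≻). -/

import Mathlib

/-!
Both sides are continuous functions of the end time `t ∈ [0, L]` that vanish at `t = 0`, and off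
the finitely many break points of `X` they satisfy the same differential equation, so they agree.
On the left, `d⟨σ(Y)_t, w∘i⟩ = ⟨σ(Y)_t, w⟩ dY^i_t`. On the right, `Λ_B(w∘i) = Λ_B(w) ≻ B(e_i)`
and `d⟨σ(X)_t, a ≻ b⟩ = ⟨σ(X)_t, a⟩ d⟨σ(X)_t, b⟩`, by the shuffle identity
`⟨σ(X)_t, u ⧢ v⟩ = ⟨σ(X)_t, u⟩⟨σ(X)_t, v⟩`, itself proved by the same comparison of derivatives.
Induction on the length of `w` closes the argument. The calculus works for any path whose
derivative is integrable and continuous off a finite set; this class contains piecewise `C¹`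
paths and contains `Y` whenever it contains `X`.
-/

noncomputable section

open MeasureTheory

/-- Words in the alphabet `{1,…,d}`. -/
abbrev Word (d : ℕ) := List (Fin d)

/-- `T(ℝ^d)`: the real vector space with basis the words in `{1,…,d}`. -/
abbrev Tens (d : ℕ) := Word d →₀ ℝ

namespace SigPaper

variable {d m s : ℕ}

/-- The basis word `w` as an element of `T(ℝ^d)`. -/
def wordT (w : Word d) : Tens d := Finsupp.single w 1

/-- The shuffle product of two words. -/
def shuffleWord : Word d → Word d → Tens d
  | [], v => Finsupp.single v 1
  | u, [] => Finsupp.single u 1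
  | a :: u, b :: v =>
      Finsupp.mapDomain (fun w => a :: w) (shuffleWord u (b :: v)) +
      Finsupp.mapDomain (fun w => b :: w) (shuffleWord (a :: u) v)
  termination_by u v => u.length + v.length
  decreasing_by all_goals simp +arith

/-- The shuffle product `⧢` on `T(ℝ^d)`, the bilinear extension of the shuffle of words. -/
def shuffle (x y : Tens d) : Tens d :=
  x.sum fun u a => y.sum fun v b => (a * b) • shuffleWord u v

/-- The operator appending the letter `i` at the end of every word (`T_i^+`). -/
def appendLetter (i : Fin d) (x : Tens d) : Tens d :=
  Finsupp.mapDomain (fun w => w ++ [i]) x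

/-- The right half-shuffle of two words: `w ≻ (v∘i) = (w ⧢ v)∘i` (zero if the right word
is empty). -/
def halfShuffleWord (u v : Word d) : Tens d :=
  match v.getLast? with
  | none => 0
  | some i => appendLetter i (shuffleWord u v.dropLast)

/-- The right half-shuffle `≻`, extended bilinearly. -/
def halfShuffle (x y : Tens d) : Tens d :=
  x.sum fun u a => y.sum fun v b => (a * b) • halfShuffleWord u v

/-- The letter-appending operator `T_i^+`. -/
def Tplus (i : Fin d) : Tens d → Tens d := appendLetter i

/-- `T_i^-` on a word: removes the last letter if it equals `i`, otherwise `0`. -/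
def TminusWord (i : Fin d) (w : Word d) : Tens d :=
  match w.getLast? with
  | none => 0
  | some j => if j = i then Finsupp.single w.dropLast 1 else 0

/-- The letter-removing operator `T_i^-`. -/
def Tminus (i : Fin d) (x : Tens d) : Tens d := x.sum fun w a => a • TminusWord i w

/-- The single-letter word `i` in `T(ℝ^d)`. -/
def letterT (i : Fin d) : Tens d := Finsupp.single [i] 1

/-- Shuffle powers `x^{⧢ n}`. -/
def shufflePow (x : Tens d) : ℕ → Tens d
  | 0 => Finsupp.single [] 1
  | n + 1 => shuffle (shufflePow x n) x

/-- Shuffle product of a list of elements. -/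
def shuffleList : List (Tens d) → Tens d
  | [] => Finsupp.single [] 1
  | x :: xs => shuffle x (shuffleList xs)

/-- Image of the monomial `x^t` under `φ_d`: the shuffle product of its letters. -/
def phiMon (t : Fin d →₀ ℕ) : Tens d :=
  shuffleList ((List.finRange d).map fun i => shufflePow (letterT i) (t i))

/-- The embedding `φ_d : ℝ[x₁,…,x_d] → (T(ℝ^d), ⧢)` sending the monomial
`x_{i₁}⋯x_{i_l}` to `i₁ ⧢ ⋯ ⧢ i_l`. -/
def phi (f : MvPolynomial (Fin d) ℝ) : Tens d :=
  f.support.sum fun t => f.coeff t • phiMon t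

/-- A polynomial map `p : ℝ^d → ℝ^m`, given by `m` polynomials in `d` variables. -/
abbrev PolyMap (d m : ℕ) := Fin m → MvPolynomial (Fin d) ℝ

/-- `k_p^{ij} = φ_d(∂p_i/∂x_j) ∈ T(ℝ^d)`. -/
def kP (p : PolyMap d m) (i : Fin m) (j : Fin d) : Tens d :=
  phi (MvPolynomial.pderiv j (p i))

/-- Auxiliary: `M_p` on reversed words, so that `M_p(e) = e` and
`M_p(w∘i) = Σ_j (M_p(w) ⧢ k_p^{ij})∘j`. -/
def MpRev (p : PolyMap d m) : List (Fin m) → Tens d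
  | [] => Finsupp.single [] 1
  | i :: w => ∑ j : Fin d, appendLetter j (shuffle (MpRev p w) (kP p i j))

/-- `M_p` on a word. -/
def MpWord (p : PolyMap d m) (w : Word m) : Tens d := MpRev p w.reverse

/-- The linear map `M_p : T(ℝ^m) → T(ℝ^d)`. -/
def Mp (p : PolyMap d m) (x : Tens m) : Tens d := x.sum fun w a => a • MpWord p w

/-- `X : [0,L] → ℝ^d` is piecewise continuously differentiable: there is a partition
`0 = t₀ ≤ t₁ ≤ ⋯ ≤ t_n = L` such that `X` is `C¹` on each subinterval. -/
def PiecewiseC1 (X : ℝ → Fin d → ℝ) (L : ℝ) : Prop :=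
  ∃ (n : ℕ) (t : Fin (n + 1) → ℝ), Monotone t ∧ t 0 = 0 ∧ t (Fin.last n) = L ∧
    ∀ k : Fin n, ContDiffOn ℝ 1 X (Set.Icc (t k.castSucc) (t k.succ))

/-- Iterated-integral signature coefficients, on reversed words:
`⟨σ(X|_{[0,t]}), w∘i⟩ = ∫_0^t ⟨σ(X|_{[0,r]}), w⟩ Ẋ^i_r dr`. -/
def sigRev (X : ℝ → Fin d → ℝ) : List (Fin d) → ℝ → ℝ
  | [], _ => 1
  | i :: w, t => ∫ r in (0:ℝ)..t, sigRev X w r * deriv (fun u => X u i) r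

/-- `⟨σ(X|_{[0,L]}), w⟩`, the signature coefficient of the word `w`. -/
def sigWord (X : ℝ → Fin d → ℝ) (L : ℝ) (w : Word d) : ℝ := sigRev X w.reverse L

/-- The pairing `⟨σ(X|_{[0,L]}), x⟩` for `x ∈ T(ℝ^d)`. -/
def sigT (X : ℝ → Fin d → ℝ) (L : ℝ) (x : Tens d) : ℝ :=
  x.sum fun w a => a * sigWord X L w

/-- The transformed path `p(X) : t ↦ p(X(t))`. -/
def pPath (p : PolyMap d m) (X : ℝ → Fin d → ℝ) : ℝ → Fin m → ℝ :=
  fun t i => MvPolynomial.eval (X t) (p i)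

/-- The translated polynomial map `p̃(y) = p(y + x₀) − p(x₀)`, satisfying `p̃(0) = 0`. -/
def ptilde (p : PolyMap d m) (x0 : Fin d → ℝ) : PolyMap d m := fun i =>
  MvPolynomial.aeval (fun j => MvPolynomial.X j + MvPolynomial.C (x0 j)) (p i) -
    MvPolynomial.C (MvPolynomial.eval x0 (p i))

/-- The pairing `⟨exp_∘(L·𝟙), x⟩` for `x ∈ T(ℝ¹)`: the coefficient of the word of
length `n` in `exp_∘(L·𝟙)` is `Lⁿ/n!`. -/
def expPair (L : ℝ) (x : Tens 1) : ℝ :=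
  x.sum fun w a => a * (L ^ w.length / (w.length.factorial : ℝ))

/-- The pairing `⟨σ(X) ∘ σ(Y), x⟩` of the concatenation product of two signatures with
`x ∈ T(ℝ^d)`: on a word `w` it is `Σ_{u∘v = w} ⟨σ(X), u⟩·⟨σ(Y), v⟩`. -/
def concatPair (X Y : ℝ → Fin d → ℝ) (L : ℝ) (x : Tens d) : ℝ :=
  x.sum fun w a =>
    a * ∑ k ∈ Finset.range (w.length + 1), sigWord X L (w.take k) * sigWord Y L (w.drop k)


open Set intervalIntegral

lemma shuffleWord_nil_left (v : Word d) : shuffleWord [] v = Finsupp.single v 1 := by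
  rw [shuffleWord]

lemma shuffleWord_nil_right (u : Word d) : shuffleWord u [] = Finsupp.single u 1 := by
  cases u <;> simp [shuffleWord]

lemma shuffleWord_cons_cons (a b : Fin d) (u v : Word d) :
    shuffleWord (a :: u) (b :: v) =
      Finsupp.mapDomain (a :: ·) (shuffleWord u (b :: v)) +
      Finsupp.mapDomain (b :: ·) (shuffleWord (a :: u) v) := by
  rw [shuffleWord]

lemma appendLetter_single (i : Fin d) (w : Word d) (c : ℝ) :
    appendLetter i (Finsupp.single w c) = Finsupp.single (w ++ [i]) c :=
  Finsupp.mapDomain_single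

lemma appendLetter_add (i : Fin d) (x y : Tens d) :
    appendLetter i (x + y) = appendLetter i x + appendLetter i y :=
  Finsupp.mapDomain_add

lemma appendLetter_mapDomain_cons (i a : Fin d) (z : Tens d) :
    appendLetter i (Finsupp.mapDomain (a :: ·) z) =
      Finsupp.mapDomain (a :: ·) (appendLetter i z) := by
  simp only [appendLetter, ← Finsupp.mapDomain_comp]
  rfl

lemma appendLetter_apply_nil (i : Fin d) (z : Tens d) : appendLetter i z [] = 0 :=
  Finsupp.mapDomain_of_notMem_range _ _ (by simp)

lemma shuffleWord_append_singleton (u v : Word d) (i j : Fin d) :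
    shuffleWord (u ++ [i]) (v ++ [j]) =
      appendLetter i (shuffleWord u (v ++ [j])) + appendLetter j (shuffleWord (u ++ [i]) v) := by
  induction u generalizing v with
  | nil =>
    induction v with
    | nil =>
      simp only [List.nil_append, shuffleWord_cons_cons, shuffleWord_nil_left,
        shuffleWord_nil_right, appendLetter_single, Finsupp.mapDomain_single]
      simp [add_comm]
    | cons b v ih =>
      simp only [List.nil_append, List.cons_append] at ih ⊢
      rw [shuffleWord_cons_cons, shuffleWord_cons_cons i b [] v, ih]
      simp only [shuffleWord_nil_left, Finsupp.mapDomain_add, Finsupp.mapDomain_single,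
        appendLetter_add, appendLetter_single, appendLetter_mapDomain_cons, List.cons_append]
      abel
  | cons a u ihu =>
    induction v with
    | nil =>
      have h := ihu []
      simp only [List.nil_append, List.cons_append] at h ⊢
      rw [shuffleWord_cons_cons, shuffleWord_cons_cons a j u [], h]
      simp only [shuffleWord_nil_right, Finsupp.mapDomain_add, Finsupp.mapDomain_single,
        appendLetter_add, appendLetter_single, appendLetter_mapDomain_cons, List.cons_append]
      abel
    | cons b v ihv =>
      have h := ihu (b :: v)
      simp only [List.cons_append] at h ihv ⊢
      rw [shuffleWord_cons_cons, h, ihv, shuffleWord_cons_cons a b u (v ++ [j]),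
        shuffleWord_cons_cons a b (u ++ [i]) v]
      simp only [Finsupp.mapDomain_add, appendLetter_add, appendLetter_mapDomain_cons]
      abel

lemma halfShuffleWord_nil_right (u : Word d) : halfShuffleWord u [] = 0 := rfl

lemma halfShuffleWord_append_singleton (u v : Word d) (j : Fin d) :
    halfShuffleWord u (v ++ [j]) = appendLetter j (shuffleWord u v) := by
  simp [halfShuffleWord]

lemma halfShuffle_wordT_wordT (u v : Word d) :
    halfShuffle (wordT u) (wordT v) = halfShuffleWord u v := by
  simp [halfShuffle, wordT]

lemma halfShuffleWord_apply_nil (u v : Word d) : halfShuffleWord u v [] = 0 := by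
  rcases List.eq_nil_or_concat v with rfl | ⟨v, j, rfl⟩
  · rfl
  · rw [List.concat_eq_append, halfShuffleWord_append_singleton, appendLetter_apply_nil]

lemma halfShuffle_apply_nil (x y : Tens d) : halfShuffle x y [] = 0 := by
  simp [halfShuffle, Finsupp.sum_apply, halfShuffleWord_apply_nil]

lemma halfShuffleWord_nil_left {v : Word d} (hv : v ≠ []) : halfShuffleWord [] v = wordT v := by
  obtain ⟨v, j, rfl⟩ := (List.eq_nil_or_concat v).resolve_left hv
  rw [List.concat_eq_append, halfShuffleWord_append_singleton, shuffleWord_nil_left,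
    appendLetter_single, wordT]

lemma wordT_append_singleton (w : Word d) (i : Fin d) :
    wordT (w ++ [i]) = halfShuffle (wordT w) (wordT [i]) := by
  have h := halfShuffleWord_append_singleton w [] i
  rw [List.nil_append, shuffleWord_nil_right, appendLetter_single] at h
  rw [halfShuffle_wordT_wordT, h, wordT]

lemma halfShuffle_wordT_nil {y : Tens d} (hy : y [] = 0) : halfShuffle (wordT []) y = y := by
  conv_rhs => rw [← Finsupp.sum_single y]
  rw [halfShuffle, wordT, Finsupp.sum_single_index (by simp)]
  simp only [one_mul]
  refine Finsupp.sum_congr fun v hv => ?_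
  rw [halfShuffleWord_nil_left (by rintro rfl; exact Finsupp.mem_support_iff.1 hv hy), wordT,
    Finsupp.smul_single_one]

/-- `Λ_B` on reversed words, built from `Λ_B(w∘i) = Λ_B(w) ≻ B(e_i)` starting at the empty word;
the start is harmless because `e ≻ y = y` for `y ∈ T^{≥1}`. -/
def zinbielRev (B : Fin m → Tens d) : List (Fin m) → Tens d
  | [] => wordT []
  | i :: u => halfShuffle (zinbielRev B u) (B i)

lemma wordT_apply_nil {w : Word d} (hw : w ≠ []) : wordT w [] = 0 :=
  Finsupp.single_eq_of_ne' hw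

theorem map_wordT_reverse_eq_zinbielRev (B : Fin m → Tens d) (hB : ∀ i, B i [] = 0)
    (Lam : Tens m →ₗ[ℝ] Tens d) (hLamLetter : ∀ i : Fin m, Lam (wordT [i]) = B i)
    (hLamHom : ∀ x y : Tens m, x [] = 0 → y [] = 0 →
      Lam (halfShuffle x y) = halfShuffle (Lam x) (Lam y)) :
    ∀ u : List (Fin m), u ≠ [] → Lam (wordT u.reverse) = zinbielRev B u
  | [], hu => absurd rfl hu
  | [i], _ => by rw [List.reverse_singleton, hLamLetter, zinbielRev, zinbielRev,
      halfShuffle_wordT_nil (hB i)]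
  | i :: j :: u, _ => by
    rw [List.reverse_cons, wordT_append_singleton, hLamHom _ _ (wordT_apply_nil (by simp))
      (wordT_apply_nil (by simp)), hLamLetter,
      map_wordT_reverse_eq_zinbielRev B hB Lam hLamLetter hLamHom (j :: u) (by simp)]
    rfl

section SignatureAlgebra

variable (X : ℝ → Fin d → ℝ)

lemma sigT_eq_linearCombination (s : ℝ) :
    sigT X s = Finsupp.linearCombination ℝ (sigWord X s) := rfl

lemma sigT_add (s : ℝ) (y z : Tens d) : sigT X s (y + z) = sigT X s y + sigT X s z := by
  simp only [sigT_eq_linearCombination, map_add]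

lemma sigT_single (s : ℝ) (w : Word d) (c : ℝ) :
    sigT X s (Finsupp.single w c) = c * sigWord X s w := by
  simp [sigT_eq_linearCombination]

lemma sigT_wordT (s : ℝ) (w : Word d) : sigT X s (wordT w) = sigWord X s w := by
  simp [wordT, sigT_single]

lemma sigWord_nil (s : ℝ) : sigWord X s [] = 1 := rfl

lemma sigWord_append_singleton (s : ℝ) (w : Word d) (j : Fin d) :
    sigWord X s (w ++ [j]) = sigRev X (j :: w.reverse) s := by
  simp [sigWord]

lemma sigRev_zero (w : List (Fin d)) : sigRev X w 0 = if w = [] then 1 else 0 := by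
  cases w <;> simp [sigRev]

lemma sigT_zero (z : Tens d) : sigT X 0 z = z [] := by
  simp only [sigT, sigWord, sigRev_zero, List.reverse_eq_nil_iff, mul_ite, mul_one, mul_zero,
    Finsupp.sum_ite_eq', Finsupp.mem_support_iff, ne_eq, ite_not]
  split_ifs with h <;> simp [h]

def sigRevDeriv : List (Fin d) → ℝ → ℝ
  | [] => 0
  | i :: w => fun x => sigRev X w x * deriv (fun u => X u i) x

lemma sigRev_cons (i : Fin d) (w : List (Fin d)) :
    sigRev X (i :: w) = fun s => ∫ r in (0 : ℝ)..s, sigRevDeriv X (i :: w) r := rfl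

def sigTDeriv (z : Tens d) (x : ℝ) : ℝ :=
  z.sum fun w a => a * sigRevDeriv X w.reverse x

lemma sigTDeriv_appendLetter (i : Fin d) (z : Tens d) (x : ℝ) :
    sigTDeriv X (appendLetter i z) x = sigT X x z * deriv (fun u => X u i) x := by
  rw [sigTDeriv, appendLetter, Finsupp.sum_mapDomain_index (by simp) (fun _ _ _ => add_mul _ _ _)]
  simp [sigRevDeriv, sigT, sigWord, Finsupp.sum, Finset.sum_mul, mul_assoc]

end SignatureAlgebra

theorem eqOn_Icc_of_hasDerivAt_off_countable {F G f : ℝ → ℝ} {a b : ℝ} {S : Set ℝ}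
    (hS : S.Countable) (hF : ContinuousOn F (Icc a b)) (hG : ContinuousOn G (Icc a b))
    (ha : F a = G a) (hF' : ∀ x ∈ Ioo a b \ S, HasDerivAt F (f x) x)
    (hG' : ∀ x ∈ Ioo a b \ S, HasDerivAt G (f x) x) : EqOn F G (Icc a b) := by
  intro s hs
  have hsub : Ioo a s \ S ⊆ Ioo a b \ S := sdiff_subset_sdiff_left (Ioo_subset_Ioo_right hs.2)
  have h := integral_eq_of_hasDerivAt_off_countable_of_le (F - G) 0 hs.1 hS
    ((hF.sub hG).mono (Icc_subset_Icc_right hs.2))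
    (fun x hx => by simpa using (hF' x (hsub hx)).sub (hG' x (hsub hx))) intervalIntegrable_const
  simp only [Pi.zero_apply, intervalIntegral.integral_zero, Pi.sub_apply] at h
  linarith

theorem hasDerivAt_integral_of_continuousAt {g : ℝ → ℝ} {L x : ℝ}
    (hg : IntervalIntegrable g volume 0 L) (hx : x ∈ Ioo 0 L) (hgx : ContinuousAt g x) :
    HasDerivAt (fun s => ∫ r in (0 : ℝ)..s, g r) (g x) x := by
  have hIoo : IntegrableOn g (Ioo 0 L) := hg.1.mono_set Ioo_subset_Ioc_self
  refine integral_hasDerivAt_right (hg.mono_set ?_) ?_ hgx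
  · rw [uIcc_of_le hx.1.le, uIcc_of_le (hx.1.trans hx.2).le]
    exact Icc_subset_Icc_right hx.2.le
  · exact AEStronglyMeasurable.stronglyMeasurableAtFilter_of_mem hIoo.aestronglyMeasurable
      (isOpen_Ioo.mem_nhds hx)

lemma exists_mem_Ioo_of_notMem_range {n : ℕ} {t : Fin (n + 1) → ℝ} {x : ℝ} (h0 : t 0 < x)
    (hlast : x < t (Fin.last n)) (hx : x ∉ range t) :
    ∃ k : Fin n, x ∈ Ioo (t k.castSucc) (t k.succ) := by
  suffices ∀ j : Fin (n + 1), x < t j → ∃ k : Fin n, x ∈ Ioo (t k.castSucc) (t k.succ) from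
    this _ hlast
  intro j
  induction j using Fin.induction with
  | zero => exact fun h => absurd h0 h.not_gt
  | succ j ih =>
    intro h
    by_cases hj : x < t j.castSucc
    · exact ih hj
    · exact ⟨j, (not_lt.1 hj).lt_of_ne fun e => hx ⟨_, e⟩, h⟩

lemma intervalIntegrable_deriv_of_contDiffOn {f : ℝ → ℝ} {a b : ℝ} (hab : a ≤ b)
    (hf : ContDiffOn ℝ 1 f (Icc a b)) : IntervalIntegrable (deriv f) volume a b := by
  rcases hab.eq_or_lt with rfl | hlt
  · exact IntervalIntegrable.refl
  refine ((hf.continuousOn_derivWithin (uniqueDiffOn_Icc hlt) le_rfl).intervalIntegrable_of_Icc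
    hab).congr_uIoo fun x hx => ?_
  rw [uIoo_of_le hab] at hx
  exact derivWithin_of_mem_nhds (Icc_mem_nhds hx.1 hx.2)

structure RegularPath (X : ℝ → Fin d → ℝ) (L : ℝ) (S : Set ℝ) : Prop where
  nonneg : 0 ≤ L
  finite : S.Finite
  intervalIntegrable_deriv : ∀ i, IntervalIntegrable (deriv fun u => X u i) volume 0 L
  continuousAt_deriv : ∀ i, ∀ x ∈ Ioo 0 L \ S, ContinuousAt (deriv fun u => X u i) x

theorem RegularPath.of_hasDerivAt {Y : ℝ → Fin m → ℝ} {Y' : Fin m → ℝ → ℝ} {L : ℝ}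
    {S : Set ℝ} (hL : 0 ≤ L) (hS : S.Finite)
    (hY : ∀ i, ∀ x ∈ Ioo 0 L \ S, HasDerivAt (fun t => Y t i) (Y' i x) x)
    (hint : ∀ i, IntervalIntegrable (Y' i) volume 0 L)
    (hcont : ∀ i, ∀ x ∈ Ioo 0 L \ S, ContinuousAt (Y' i) x) : RegularPath Y L S := by
  have hopen : IsOpen (Ioo 0 L \ S) := isOpen_Ioo.sdiff hS.isClosed
  have heq : ∀ i, EqOn (deriv fun t => Y t i) (Y' i) (Ioo 0 L \ S) :=
    fun i x hx => (hY i x hx).deriv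
  refine ⟨hL, hS, fun i => (hint i).congr_ae ?_, fun i x hx => ?_⟩
  · rw [uIoc_of_le hL]
    filter_upwards [ae_restrict_mem measurableSet_Ioc,
      ae_restrict_of_ae ((hS.insert L).countable.ae_notMem volume)] with x hx hxLS
    obtain ⟨hxL, hxS⟩ : x ≠ L ∧ x ∉ S := by simpa using hxLS
    exact (heq i ⟨⟨hx.1, hx.2.lt_of_ne hxL⟩, hxS⟩).symm
  · exact (hcont i x hx).congr (Filter.eventuallyEq_of_mem (hopen.mem_nhds hx) (heq i)).symm

theorem PiecewiseC1.exists_regularPath {X : ℝ → Fin d → ℝ} {L : ℝ} (hX : PiecewiseC1 X L) :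
    ∃ S, RegularPath X L S := by
  obtain ⟨n, t, hmono, ht0, htL, hC1⟩ := hX
  have hpiece : ∀ k : Fin n, ∀ i, ContDiffOn ℝ 1 (fun u => X u i) (Icc (t k.castSucc) (t k.succ)) :=
    fun k => contDiffOn_pi.1 (hC1 k)
  refine ⟨range t, htL ▸ ht0 ▸ hmono (Fin.zero_le _), finite_range t, fun i => ?_, fun i x hx => ?_⟩
  · have h : ∀ j : Fin (n + 1), IntervalIntegrable (deriv fun u => X u i) volume 0 (t j) := by
      intro j
      induction j using Fin.induction with
      | zero => rw [ht0]
      | succ j ih =>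
        exact ih.trans (intervalIntegrable_deriv_of_contDiffOn
          (hmono Fin.castSucc_lt_succ.le) (hpiece j i))
    simpa [htL] using h (Fin.last n)
  · obtain ⟨k, hk⟩ := exists_mem_Ioo_of_notMem_range (ht0 ▸ hx.1.1) (htL ▸ hx.1.2) hx.2
    exact (((hpiece k i).mono Ioo_subset_Icc_self).continuousOn_deriv_of_isOpen isOpen_Ioo
      le_rfl).continuousAt (isOpen_Ioo.mem_nhds hk)

namespace RegularPath

variable {X : ℝ → Fin d → ℝ} {L : ℝ} {S : Set ℝ} {x : ℝ}

theorem continuousOn_sigRev (hX : RegularPath X L S) (w : List (Fin d)) :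
    ContinuousOn (sigRev X w) (Icc 0 L) := by
  induction w with
  | nil => exact continuousOn_const
  | cons i w ih =>
    have hint : IntervalIntegrable (sigRevDeriv X (i :: w)) volume 0 L :=
      (hX.intervalIntegrable_deriv i).continuousOn_mul (by rwa [uIcc_of_le hX.nonneg])
    rw [sigRev_cons, ← uIcc_of_le hX.nonneg]
    exact continuousOn_primitive_interval' hint left_mem_uIcc

theorem intervalIntegrable_sigRevDeriv (hX : RegularPath X L S) :
    ∀ w : List (Fin d), IntervalIntegrable (sigRevDeriv X w) volume 0 L
  | [] => intervalIntegrable_const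
  | i :: w => (hX.intervalIntegrable_deriv i).continuousOn_mul
      (by rw [uIcc_of_le hX.nonneg]; exact hX.continuousOn_sigRev w)

theorem continuousAt_sigRevDeriv (hX : RegularPath X L S) (hx : x ∈ Ioo 0 L \ S) :
    ∀ w : List (Fin d), ContinuousAt (sigRevDeriv X w) x
  | [] => continuousAt_const
  | i :: w => ((hX.continuousOn_sigRev w).continuousAt (Icc_mem_nhds hx.1.1 hx.1.2)).mul
      (hX.continuousAt_deriv i x hx)

theorem hasDerivAt_sigRev (hX : RegularPath X L S) (hx : x ∈ Ioo 0 L \ S) :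
    ∀ w : List (Fin d), HasDerivAt (sigRev X w) (sigRevDeriv X w x) x
  | [] => hasDerivAt_const x 1
  | i :: w => by
    rw [sigRev_cons]
    exact hasDerivAt_integral_of_continuousAt (hX.intervalIntegrable_sigRevDeriv _) hx.1
      (hX.continuousAt_sigRevDeriv hx _)

theorem continuousOn_sigT (hX : RegularPath X L S) (z : Tens d) :
    ContinuousOn (sigT X · z) (Icc 0 L) :=
  continuousOn_finsetSum _ fun _ _ => continuousOn_const.mul (hX.continuousOn_sigRev _)

theorem intervalIntegrable_sigTDeriv (hX : RegularPath X L S) (z : Tens d) :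
    IntervalIntegrable (sigTDeriv X z) volume 0 L := by
  have h := IntervalIntegrable.sum z.support fun w _ =>
    (hX.intervalIntegrable_sigRevDeriv w.reverse).const_mul (z w)
  rw [Finset.sum_fn] at h
  exact h

theorem continuousAt_sigTDeriv (hX : RegularPath X L S) (hx : x ∈ Ioo 0 L \ S)
    (z : Tens d) : ContinuousAt (sigTDeriv X z) x :=
  tendsto_finsetSum _ fun _ _ => continuousAt_const.mul (hX.continuousAt_sigRevDeriv hx _)

theorem hasDerivAt_sigT (hX : RegularPath X L S) (hx : x ∈ Ioo 0 L \ S) (z : Tens d) :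
    HasDerivAt (sigT X · z) (sigTDeriv X z x) x :=
  HasDerivAt.fun_sum fun _ _ => (hX.hasDerivAt_sigRev hx _).const_mul _

theorem sigT_path (hX : RegularPath X L S) (B : Fin m → Tens d) :
    RegularPath (fun t i => sigT X t (B i)) L S :=
  of_hasDerivAt hX.nonneg hX.finite (fun i _ hx => hX.hasDerivAt_sigT hx (B i))
    (fun i => hX.intervalIntegrable_sigTDeriv (B i)) (fun _ _ hx => hX.continuousAt_sigTDeriv hx _)

theorem hasDerivAt_sigT_appendLetter (hX : RegularPath X L S) (hx : x ∈ Ioo 0 L \ S)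
    (i : Fin d) (z : Tens d) :
    HasDerivAt (sigT X · (appendLetter i z)) (sigT X x z * deriv (fun u => X u i) x) x :=
  sigTDeriv_appendLetter X i z x ▸ hX.hasDerivAt_sigT hx _

theorem hasDerivAt_sigWord_append_singleton (hX : RegularPath X L S) (hx : x ∈ Ioo 0 L \ S)
    (w : Word d) (i : Fin d) :
    HasDerivAt (sigWord X · (w ++ [i])) (sigWord X x w * deriv (fun u => X u i) x) x := by
  simp_rw [sigWord_append_singleton]
  exact hX.hasDerivAt_sigRev hx _

theorem sigT_shuffleWord (hX : RegularPath X L S) (u v : Word d) :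
    ∀ s ∈ Icc 0 L, sigT X s (shuffleWord u v) = sigWord X s u * sigWord X s v := by
  induction u using List.reverseRecOn generalizing v with
  | nil => intro s _; simp [shuffleWord_nil_left, sigT_single, sigWord_nil]
  | append_singleton u i ihu =>
    induction v using List.reverseRecOn with
    | nil => intro s _; simp [shuffleWord_nil_right, sigT_single, sigWord_nil]
    | append_singleton v j ihv =>
      refine eqOn_Icc_of_hasDerivAt_off_countable (f := fun x =>
          sigT X x (shuffleWord u (v ++ [j])) * deriv (fun u => X u i) x +
            sigT X x (shuffleWord (u ++ [i]) v) * deriv (fun u => X u j) x)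
        hX.finite.countable (hX.continuousOn_sigT _)
        ((hX.continuousOn_sigRev (u ++ [i]).reverse).mul
          (hX.continuousOn_sigRev (v ++ [j]).reverse))
        ?_ (fun x hx => ?_) (fun x hx => ?_)
      · simp [sigT_zero, shuffleWord_append_singleton, appendLetter_apply_nil,
          sigWord_append_singleton, sigRev_zero]
      · simp only [shuffleWord_append_singleton, sigT_add]
        exact (hX.hasDerivAt_sigT_appendLetter hx i _).add (hX.hasDerivAt_sigT_appendLetter hx j _)
      · have hxI : x ∈ Icc 0 L := Ioo_subset_Icc_self hx.1
        refine ((hX.hasDerivAt_sigWord_append_singleton hx u i).mul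
          (hX.hasDerivAt_sigWord_append_singleton hx v j)).congr_deriv ?_
        rw [ihu (v ++ [j]) x hxI, ihv x hxI]
        ring

theorem hasDerivAt_sigT_halfShuffleWord (hX : RegularPath X L S) (hx : x ∈ Ioo 0 L \ S)
    (u v : Word d) :
    HasDerivAt (sigT X · (halfShuffleWord u v)) (sigWord X x u * sigRevDeriv X v.reverse x) x := by
  rcases List.eq_nil_or_concat v with rfl | ⟨v, j, rfl⟩
  · simpa [halfShuffleWord_nil_right, sigRevDeriv, sigT] using hasDerivAt_const x (0 : ℝ)
  · rw [List.concat_eq_append, halfShuffleWord_append_singleton]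
    refine (hX.hasDerivAt_sigT_appendLetter hx j (shuffleWord u v)).congr_deriv ?_
    rw [hX.sigT_shuffleWord u v x (Ioo_subset_Icc_self hx.1)]
    simp [sigRevDeriv, sigWord, mul_assoc]

theorem hasDerivAt_sigT_halfShuffle (hX : RegularPath X L S) (hx : x ∈ Ioo 0 L \ S)
    (z y : Tens d) :
    HasDerivAt (sigT X · (halfShuffle z y)) (sigT X x z * sigTDeriv X y x) x := by
  have h : (sigT X · (halfShuffle z y)) = fun s =>
      z.sum fun u a => y.sum fun v b => a * b * sigT X s (halfShuffleWord u v) := by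
    funext s
    simp only [halfShuffle, sigT_eq_linearCombination, map_finsuppSum, map_smul, smul_eq_mul]
  have h' : sigT X x z * sigTDeriv X y x =
      z.sum fun u a => y.sum fun v b => a * b * (sigWord X x u * sigRevDeriv X v.reverse x) := by
    simp only [sigT, sigTDeriv, Finsupp.sum, Finset.sum_mul_sum]
    exact Finset.sum_congr rfl fun _ _ => Finset.sum_congr rfl fun _ _ => by ring
  rw [h, h']
  exact HasDerivAt.fun_sum fun u _ => HasDerivAt.fun_sum fun v _ =>
    (hX.hasDerivAt_sigT_halfShuffleWord hx u v).const_mul _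

theorem sigRev_sigT_path (hX : RegularPath X L S) (B : Fin m → Tens d) (u : List (Fin m)) :
    ∀ s ∈ Icc 0 L, sigRev (fun t i => sigT X t (B i)) u s = sigT X s (zinbielRev B u) := by
  induction u with
  | nil => intro s _; simp [sigRev, zinbielRev, sigT_wordT, sigWord_nil]
  | cons i u ih =>
    have hY := hX.sigT_path B
    refine eqOn_Icc_of_hasDerivAt_off_countable hX.finite.countable (hY.continuousOn_sigRev _)
      (hX.continuousOn_sigT _) ?_ (fun x hx => hY.hasDerivAt_sigRev hx _) (fun x hx => ?_)
    · simp [sigRev_zero, sigT_zero, zinbielRev, halfShuffle_apply_nil]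
    · have h : sigRevDeriv (fun t i => sigT X t (B i)) (i :: u) x =
          sigT X x (zinbielRev B u) * sigTDeriv X (B i) x := by
        simp only [sigRevDeriv]
        rw [ih x (Ioo_subset_Icc_self hx.1), (hX.hasDerivAt_sigT hx (B i)).deriv]
      rw [h]
      exact hX.hasDerivAt_sigT_halfShuffle hx _ _

end RegularPath

/-- For a piecewise continuously differentiable path `X : [0,L] → ℝ^d` and
a linear map `B : ℝ^m → T^{≥1}(ℝ^d)` (given by its values `B i` on the standard basis),
the path `Y_t^i := ⟨σ(X|_{[0,t]}), B(e_i)⟩` satisfies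
`⟨σ(Y), w⟩ = ⟨σ(X), Λ_B(w)⟩` for all `w ∈ T^{≥1}(ℝ^m)`, where `Λ_B` is the unique
Zinbiel-homomorphism extension of `B`. -/
theorem signature_zinbiel_transform (d m : ℕ) (L : ℝ)
    (X : ℝ → Fin d → ℝ) (hX : PiecewiseC1 X L)
    (B : Fin m → Tens d) (hB : ∀ i, B i ([] : Word d) = 0)
    (Lam : Tens m →ₗ[ℝ] Tens d)
    (hLamLetter : ∀ i : Fin m, Lam (wordT [i]) = B i)
    (hLamHom : ∀ x y : Tens m, x ([] : Word m) = 0 → y ([] : Word m) = 0 →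
      Lam (halfShuffle x y) = halfShuffle (Lam x) (Lam y)) :
    ∀ x : Tens m, x ([] : Word m) = 0 →
      sigT (fun t i => sigT X t (B i)) L x = sigT X L (Lam x) := by
  intro x hx
  obtain ⟨S, hXS⟩ := hX.exists_regularPath
  have hword : ∀ w ∈ x.support,
      sigWord (fun t i => sigT X t (B i)) L w = sigT X L (Lam (wordT w)) := by
    intro w hw
    have hw' : w.reverse ≠ [] := by
      rintro h
      rw [List.reverse_eq_nil_iff] at h
      exact Finsupp.mem_support_iff.1 (h ▸ hw) hx
    rw [sigWord, hXS.sigRev_sigT_path B w.reverse L ⟨hXS.nonneg, le_rfl⟩,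
      ← map_wordT_reverse_eq_zinbielRev B hB Lam hLamLetter hLamHom _ hw', List.reverse_reverse]
  calc sigT (fun t i => sigT X t (B i)) L x = x.sum fun w a => a * sigT X L (Lam (wordT w)) :=
        Finsupp.sum_congr fun w hw => by rw [hword w hw]
    _ = sigT X L (Lam x) := by
      have hx' : x = x.sum fun w a => a • wordT w := by
        simp [wordT, Finsupp.sum_single]
      conv_rhs => rw [hx']
      simp only [sigT_eq_linearCombination, map_finsuppSum, map_smul, smul_eq_mul]

end SigPaper
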